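/- arXiv:2509.06104 — 3 statements merged into one kernel-verified Lean document; each statement's English description precedes it below -/
import Mathlib

section
/- Let M be the (2d+1)×(2d+1) incidence matrix of the morphism φ given by φ(i) = 0(i+1) for 0 ≤ i ≤ 2d-1 and φ(2d) = 0(2d)(2d); explicitly, M has first row all ones, subdiagonal ones in columns 0 through 2d-1 (M_{i+1,i} = 1 for 0 ≤ i ≤ 2d-1), and M_{2d,2d} = 2, with all other entries zero. Then the characteristic polynomial of M equals (t^(d+1) - 2t^d - 1)·(t^d - t^(d-1) - ... - t - 1). -/
/-!
For `k = 1, 2, …`, adding to column `k` of `X • 1 - M` the already modified column `k - 1` times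
the diagonal entry of row `k` does not change the determinant and turns each row `i > 0`
into `-eᵢ₋₁`; the determinant is then the last entry of the new first row. For the all-ones first
row of `M` these entries satisfy `Fₖ₊₁ = X Fₖ - 1`, so they are the `k`-bonacci polynomials
`Fₖ = Xᵏ - Xᵏ⁻¹ - ⋯ - 1`, except in the last column, where the diagonal entry `X - 2` gives
`F_{2d+1} - 2 F_{2d}`. As `(X - 1) Fₖ = Xᵏ⁺¹ - 2Xᵏ + 1`, multiplying by the monic `X - 1` turns
the claimed factorization into `(X^{d+1} - 2X^d)² - 1 = (X^{d+1} - 2X^d - 1)(X^{d+1} - 2X^d + 1)`.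
-/

open Polynomial

/-- The incidence matrix of the morphism φ. -/
def Mmat (d : ℕ) : Matrix (Fin (2 * d + 1)) (Fin (2 * d + 1)) ℤ :=
  Matrix.of fun i j =>
    if (i : ℕ) = 0 then 1
    else if (i : ℕ) = (j : ℕ) + 1 then 1
    else if (i : ℕ) = 2 * d ∧ (j : ℕ) = 2 * d then 2
    else 0

namespace Matrix

variable {R : Type*} [CommRing R] {n : ℕ}

theorem det_eq_of_succ_row_eq_neg_single (E : Matrix (Fin (n + 1)) (Fin (n + 1)) R)
    (hE : ∀ (i : Fin n) j, E i.succ j = if j = i.castSucc then -1 else 0) :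
    E.det = E 0 (Fin.last n) := by
  have hminor : E.submatrix Fin.succ Fin.castSucc = -1 := by
    ext i j
    by_cases h : i = j <;> simp [hE, h, eq_comm]
  rw [det_succ_column E (Fin.last n), Fin.sum_univ_succ, Finset.sum_eq_zero]
  · simp [hminor, det_neg, mul_right_comm, ← pow_add, Even.neg_one_pow ⟨n, rfl⟩]
  · intro i _
    simp [hE, (Fin.castSucc_lt_last i).ne']

theorem det_eq_of_succ_row_bidiagonal (A : Matrix (Fin (n + 1)) (Fin (n + 1)) R)
    (b : Fin n → R) (r : Fin (n + 1) → R)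
    (hA : ∀ (i : Fin n) j,
      A i.succ j = if j = i.castSucc then -1 else if j = i.succ then b i else 0)
    (hr_zero : r 0 = A 0 0) (hr_succ : ∀ k : Fin n, r k.succ = A 0 k.succ + b k * r k.castSucc) :
    A.det = r (Fin.last n) := by
  let E : Matrix (Fin (n + 1)) (Fin (n + 1)) R :=
    of (Fin.cons r fun i j => if j = i.castSucc then -1 else 0)
  calc A.det = E.det := by
        refine (det_eq_of_forall_col_eq_smul_add_pred b (fun i => ?_) fun i k => ?_).symm
        · refine Fin.cases ?_ (fun i => ?_) i
          · simp [E, hr_zero]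
          · simp [E, hA, eq_comm]
        · refine Fin.cases ?_ (fun i => ?_) i
          · simp [E, hr_succ]
          · by_cases h : k = i <;> simp [E, hA, h, (Fin.castSucc_lt_succ (i := i)).ne']
    _ = r (Fin.last n) := by
        rw [det_eq_of_succ_row_eq_neg_single E fun i j => by simp [E]]
        simp [E]

end Matrix

section KBonacci

variable (R : Type*) [CommRing R]

noncomputable def kBonacciPoly (k : ℕ) : R[X] := X ^ k - ∑ i ∈ Finset.range k, X ^ i

variable {R}

@[simp] theorem kBonacciPoly_zero : kBonacciPoly R 0 = 1 := by simp [kBonacciPoly]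

theorem kBonacciPoly_succ (k : ℕ) : kBonacciPoly R (k + 1) = X * kBonacciPoly R k - 1 := by
  simp only [kBonacciPoly, Finset.sum_range_succ', pow_succ', ← Finset.mul_sum]
  ring

theorem X_sub_one_mul_kBonacciPoly (k : ℕ) :
    (X - 1) * kBonacciPoly R k = X ^ (k + 1) - 2 * X ^ k + 1 := by
  rw [kBonacciPoly]
  linear_combination (-1 : R[X]) * geom_sum_mul (X : R[X]) k

theorem kBonacciPoly_two_mul_add_one_sub (d : ℕ) :
    kBonacciPoly R (2 * d + 1) - 2 * kBonacciPoly R (2 * d) =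
      (X ^ (d + 1) - 2 * X ^ d - 1) * kBonacciPoly R d := by
  rw [← sub_eq_zero, ← (monic_X_sub_C (1 : R)).mul_right_eq_zero_iff, map_one]
  linear_combination X_sub_one_mul_kBonacciPoly (R := R) (2 * d + 1)
    - 2 * X_sub_one_mul_kBonacciPoly (R := R) (2 * d)
    - (X ^ (d + 1) - 2 * X ^ d - 1) * X_sub_one_mul_kBonacciPoly (R := R) d

end KBonacci

theorem charmatrix_Mmat_zero (d : ℕ) (j : Fin (2 * d + 1)) :
    Matrix.charmatrix (Mmat d) 0 j = if j = 0 then X - 1 else -1 := by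
  by_cases hj : j = 0
  · simp [Mmat, hj]
  · simp [Mmat, hj, Ne.symm hj]

theorem charmatrix_Mmat_succ (d : ℕ) (i : Fin (2 * d)) (j : Fin (2 * d + 1)) :
    Matrix.charmatrix (Mmat d) i.succ j =
      if j = i.castSucc then -1
      else if j = i.succ then (if (i : ℕ) + 1 = 2 * d then X - 2 else X)
      else 0 := by
  simp only [Matrix.charmatrix_apply, Mmat, Matrix.diagonal_apply, Matrix.of_apply, Fin.ext_iff,
    Fin.val_succ, Fin.val_castSucc, Nat.add_one_ne_zero, if_false]
  split_ifs <;> first | omega | simp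

theorem stmt_4 (d : ℕ) (hd : 1 ≤ d) :
    (Mmat d).charpoly =
      (X ^ (d + 1) - 2 * X ^ d - 1) * (X ^ d - ∑ i ∈ Finset.range d, X ^ i) := by
  rw [Matrix.charpoly, ← kBonacciPoly, ← kBonacciPoly_two_mul_add_one_sub]
  refine (Matrix.det_eq_of_succ_row_bidiagonal _
    (fun i => if (i : ℕ) + 1 = 2 * d then X - 2 else X)
    (fun k => if (k : ℕ) = 2 * d then kBonacciPoly ℤ (2 * d + 1) - 2 * kBonacciPoly ℤ (2 * d)
      else kBonacciPoly ℤ (k + 1))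
    (charmatrix_Mmat_succ d) ?_ fun k => ?_).trans (if_pos (Fin.val_last _))
  · rw [charmatrix_Mmat_zero, if_pos rfl, if_neg (by simp; omega), Fin.val_zero,
      kBonacciPoly_succ, kBonacciPoly_zero, mul_one]
  · have hk : (k : ℕ) ≠ 2 * d := k.isLt.ne
    by_cases hlast : (k : ℕ) + 1 = 2 * d <;>
      simp only [charmatrix_Mmat_zero, Fin.val_succ, Fin.val_castSucc, hlast, hk, if_true,
        if_false, Fin.succ_ne_zero, kBonacciPoly_succ] <;>
      ring
end

section
/- Let λ be a complex number with λ^(d+1) - 2λ^d = 1 and λ ≠ 1. With u and v the left and right eigenvectors of M defined by u_i = (λ^(i+1) - 2λ^i + 1)/(λ-1) and v_i = λ^(2d-1-i)(λ-2) for i < 2d, v_{2d} = 1, the inner product satisfies u·v = (2λ^(d-1)/(λ-1))·(d(λ-2) + λ). -/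
/-! After clearing the denominator `λ - 1`, each of the first `2d` products `u i * v i` is
`(λ - 2)² λ^(2d-1)` plus a term of the reflected geometric sum `∑ (λ - 2) λ^j`, so the dot product is
an explicit polynomial expression in `λ`; the relation `(λ - 2) λ^d = 1` collapses it to the
closed form. -/

open Matrix Finset

variable {K : Type*}

theorem sum_range_mul_pow_add_one_mul_pow_reflect [CommRing K] (c x : K) (n : ℕ) :
    ∑ i ∈ range n, (c * x ^ i + 1) * (c * x ^ (n - 1 - i)) =
      n * c ^ 2 * x ^ (n - 1) + c * ∑ i ∈ range n, x ^ i := by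
  have hsplit : ∀ i ∈ range n, (c * x ^ i + 1) * (c * x ^ (n - 1 - i)) =
      c ^ 2 * x ^ (n - 1) + c * x ^ (n - 1 - i) := by
    intro i hi
    have hpow : x ^ (n - 1) = x ^ i * x ^ (n - 1 - i) := by
      rw [← pow_add]
      congr 1
      have := mem_range.mp hi
      omega
    rw [hpow]
    ring
  rw [sum_congr rfl hsplit, sum_add_distrib, sum_const, card_range, nsmul_eq_mul, ← mul_sum,
    sum_range_reflect (fun i => x ^ i) n]
  ring

theorem sub_one_sq_mul_dotProduct [Field K] (n : ℕ) (x : K) (hx : x ≠ 1)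
    (u v : Fin (n + 1) → K)
    (hu : ∀ i : Fin (n + 1), u i = (x ^ ((i : ℕ) + 1) - 2 * x ^ (i : ℕ) + 1) / (x - 1))
    (hv : ∀ i : Fin (n + 1), v i = if (i : ℕ) < n then x ^ (n - 1 - (i : ℕ)) * (x - 2) else 1) :
    (x - 1) ^ 2 * dotProduct u v =
      n * (x - 2) ^ 2 * x ^ (n - 1) * (x - 1) + (x - 2) * (x ^ n - 1) +
        (x - 1) * ((x - 2) * x ^ n + 1) := by
  have hx1 : x - 1 ≠ 0 := sub_ne_zero.mpr hx
  have hinit : ∀ i : Fin n, u i.castSucc * v i.castSucc =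
      ((x - 2) * x ^ (i : ℕ) + 1) * ((x - 2) * x ^ (n - 1 - (i : ℕ))) / (x - 1) := by
    intro i
    rw [hu, hv, Fin.val_castSucc, if_pos i.isLt]
    ring
  have hlast : u (Fin.last n) * v (Fin.last n) = ((x - 2) * x ^ n + 1) / (x - 1) := by
    rw [hu, hv, Fin.val_last, if_neg (lt_irrefl n)]
    ring
  rw [dotProduct, Fin.sum_univ_castSucc, hlast, sum_congr rfl (fun i _ => hinit i), ← sum_div,
    Fin.sum_univ_eq_sum_range (fun i => ((x - 2) * x ^ i + 1) * ((x - 2) * x ^ (n - 1 - i))),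
    sum_range_mul_pow_add_one_mul_pow_reflect, mul_add, ← geom_sum_mul]
  field_simp

theorem stmt_7 (d : ℕ) (hd : 1 ≤ d) (lam : ℂ)
    (hroot : lam ^ (d + 1) - 2 * lam ^ d = 1) (hne : lam ≠ 1)
    (u v : Fin (2 * d + 1) → ℂ)
    (hu : ∀ i : Fin (2 * d + 1),
      u i = (lam ^ ((i : ℕ) + 1) - 2 * lam ^ (i : ℕ) + 1) / (lam - 1))
    (hv : ∀ i : Fin (2 * d + 1),
      v i = if (i : ℕ) < 2 * d then lam ^ (2 * d - 1 - (i : ℕ)) * (lam - 2) else 1) :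
    dotProduct u v = 2 * lam ^ (d - 1) / (lam - 1) * ((d : ℂ) * (lam - 2) + lam) := by
  obtain ⟨e, rfl⟩ : ∃ e, d = e + 1 := ⟨d - 1, by omega⟩
  have hx1 : lam - 1 ≠ 0 := sub_ne_zero.mpr hne
  have hdot := sub_one_sq_mul_dotProduct _ lam hne u v hu hv
  rw [show 2 * (e + 1) - 1 = 2 * e + 1 by omega] at hdot
  rw [Nat.add_sub_cancel]
  apply mul_left_cancel₀ (pow_ne_zero 2 hx1)
  rw [hdot]
  field_simp
  push_cast
  linear_combination (2 * (e + 1) * (lam - 2) * lam ^ e * (lam - 1) + lam ^ 2 * lam ^ e - 1) * hroot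
end

section
/- Let d ≥ 3 and let λ be a complex root of t^(d+1) - 2t^d - 1 with |λ| < 1, and Λ the real root in (2,3). Then |1/((d+1)λ - 2d)| ≤ 1/(d-1), |(λ-2)λ^d/(3-λ)| ≤ 1/2, and (Λ-2)/(3-Λ) ≤ 1/(2^d - 1); consequently for all n ≥ 0, |∑_{λ ∈ S_Λ, λ ≠ Λ} (1/((d+1)λ - 2d))·((λ-2)/(3-λ) - (Λ-2)/(3-Λ))·λ^(n+d+1)| ≤ (d/(d-1))·(1/2 + 1/(2^d-1)) < 1. -/
/-!
Every root of `t ^ (d + 1) - 2 * t ^ d - 1` solves `(t - 2) * t ^ d = 1`. A root of modulus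
`r ≥ 1` has `‖t - 2‖ = r⁻ᵈ`, and for `1 ≤ r ≤ 9/5` this is at most `2 - r`; then equality holds
in `‖t - 2‖ ≥ 2 - ‖t‖`, which puts `t` on the real segment `[1, 9/5]`, where `(t - 2) * t ^ d < 0`.
So roots outside the unit disc have modulus `> 9/5`. For such roots `u = t⁻¹` solves
`u = (1 - u ^ (d + 1)) / 2`, a contraction of the disc `‖u‖ ≤ 5/9`, so `Λ` is the only one.
The estimates then follow from the triangle inequality with `‖λ‖ < 1`, over at most `d` terms.
-/

open Finset Polynomial

theorem pow_succ_sub_two_mul_pow_sub_one_eq_zero_iff {R : Type*} [CommRing R] (d : ℕ) (z : R) :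
    z ^ (d + 1) - 2 * z ^ d - 1 = 0 ↔ (z - 2) * z ^ d = 1 := by
  rw [← sub_eq_zero (b := (1 : R))]
  ring_nf

theorem card_le_of_forall_pow_succ_sub_two_mul_pow_sub_one_eq_zero {R : Type*} [CommRing R]
    [IsDomain R] {d : ℕ} {S : Finset R} (hS : ∀ z ∈ S, z ^ (d + 1) - 2 * z ^ d - 1 = 0) :
    #S ≤ d + 1 := by
  set p : R[X] := X ^ (d + 1) - 2 * X ^ d - 1
  have hp : p.natDegree = d + 1 := by unfold p; compute_degree!
  have hp0 : p ≠ 0 := ne_zero_of_natDegree_gt (n := 0) (by omega)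
  exact hp ▸ card_le_degree_of_subset_roots fun z hz =>
    (mem_roots hp0).2 (by simpa [p] using hS z hz)

theorem norm_pow_sub_pow_le {R : Type*} [SeminormedCommRing R] [NormOneClass R] {x y : R}
    {ρ : ℝ} (hx : ‖x‖ ≤ ρ) (hy : ‖y‖ ≤ ρ) (n : ℕ) :
    ‖x ^ n - y ^ n‖ ≤ n * ρ ^ (n - 1) * ‖x - y‖ := by
  have hρ : 0 ≤ ρ := (norm_nonneg x).trans hx
  rw [← geom_sum₂_mul]
  refine (norm_mul_le _ _).trans (mul_le_mul_of_nonneg_right ?_ (norm_nonneg _))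
  calc ‖∑ i ∈ range n, x ^ i * y ^ (n - 1 - i)‖ ≤ ∑ _i ∈ range n, ρ ^ (n - 1) := by
        refine norm_sum_le_of_le _ fun i hi => ?_
        have hi : i + (n - 1 - i) = n - 1 := by have := mem_range.1 hi; omega
        calc ‖x ^ i * y ^ (n - 1 - i)‖ ≤ ‖x‖ ^ i * ‖y‖ ^ (n - 1 - i) :=
              (norm_mul_le _ _).trans (mul_le_mul (norm_pow_le _ _) (norm_pow_le _ _)
                (norm_nonneg _) (by positivity))
          _ ≤ ρ ^ i * ρ ^ (n - 1 - i) := by gcongr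
          _ = ρ ^ (n - 1) := by rw [← pow_add, hi]
    _ = n * ρ ^ (n - 1) := by rw [sum_const, card_range, nsmul_eq_mul]

theorem one_le_two_sub_mul_pow {d : ℕ} (hd : 3 ≤ d) {r : ℝ} (h1 : 1 ≤ r) (h2 : r ≤ 9 / 5) :
    1 ≤ (2 - r) * r ^ d := by
  have hcubic : 1 ≤ (2 - r) * r ^ 3 := by
    nlinarith [mul_nonneg (sub_nonneg.2 h1) (mul_nonneg (sub_nonneg.2 h1) (sub_nonneg.2 h2))]
  nlinarith [pow_le_pow_right₀ h1 hd]

theorem nine_fifths_lt_norm_of_sub_two_mul_pow_eq_one {d : ℕ} (hd : 3 ≤ d) {z : ℂ}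
    (hz : (z - 2) * z ^ d = 1) (h1 : 1 ≤ ‖z‖) : 9 / 5 < ‖z‖ := by
  by_contra! h2
  set r := ‖z‖ with hr
  have hnorm : ‖z - 2‖ * r ^ d = 1 := by simpa using congrArg norm hz
  have hclose : ‖z - 2‖ ≤ 2 - r := by
    nlinarith [one_le_two_sub_mul_pow hd h1 h2, pow_pos (zero_lt_one.trans_le h1) d]
  have hnormSq : r ^ 2 = z.re ^ 2 + z.im ^ 2 := by
    rw [hr, Complex.sq_norm, Complex.normSq_apply]; ring
  have hnormSq' : ‖z - 2‖ ^ 2 = (z.re - 2) ^ 2 + z.im ^ 2 := by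
    rw [Complex.sq_norm, Complex.normSq_apply]
    simp only [Complex.sub_re, Complex.re_ofNat, Complex.sub_im, Complex.im_ofNat, sub_zero]
    ring
  have hre : z.re = r := by
    nlinarith [Complex.re_le_norm z, pow_le_pow_left₀ (norm_nonneg _) hclose 2]
  have him : z.im = 0 := by nlinarith
  have hzr : z = r := Complex.ext (by simp [hre]) (by simp [him])
  have hreal : (r - 2) * r ^ d = 1 := by exact_mod_cast hzr ▸ hz
  nlinarith [pow_pos (zero_lt_one.trans_le h1) d]

theorem two_mul_inv_add_inv_pow_eq_one {d : ℕ} {z : ℂ} (hz : (z - 2) * z ^ d = 1) :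
    2 * z⁻¹ + z⁻¹ ^ (d + 1) = 1 := by
  have hz0 : z ≠ 0 := by
    rintro rfl
    cases d <;> norm_num at hz
  rw [inv_pow]
  field_simp
  linear_combination -z * hz

theorem eq_of_two_mul_add_pow_eq_one {d : ℕ} {u v : ℂ} (hu : 2 * u + u ^ (d + 1) = 1)
    (hv : 2 * v + v ^ (d + 1) = 1) (hu' : ‖u‖ ≤ 5 / 9) (hv' : ‖v‖ ≤ 5 / 9) : u = v := by
  have hcontr : 2 * ‖u - v‖ ≤ (d + 1) * (5 / 9) ^ d * ‖u - v‖ := by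
    have h := norm_pow_sub_pow_le hv' hu' (d + 1)
    rw [show v ^ (d + 1) - u ^ (d + 1) = 2 * (u - v) by linear_combination hv - hu, norm_mul,
      norm_sub_rev v u] at h
    simpa using h
  have hbern : 1 + d * (4 / 5 : ℝ) ≤ (9 / 5) ^ d := by
    have h := one_add_mul_le_pow (a := (4 / 5 : ℝ)) (by norm_num) d
    norm_num at h ⊢
    exact h
  have hconst : (d + 1) * (5 / 9 : ℝ) ^ d < 2 := by
    have : (5 / 9 : ℝ) ^ d * (9 / 5) ^ d = 1 := by rw [← mul_pow]; norm_num
    nlinarith [pow_pos (show (0 : ℝ) < 5 / 9 by norm_num) d]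
  have : ‖u - v‖ = 0 := by nlinarith [norm_nonneg (u - v)]
  exact sub_eq_zero.1 (norm_eq_zero.1 this)

theorem norm_lt_one_of_sub_two_mul_pow_eq_one {d : ℕ} (hd : 3 ≤ d) {Λ z : ℂ}
    (hΛ : (Λ - 2) * Λ ^ d = 1) (hΛ' : 9 / 5 ≤ ‖Λ‖) (hz : (z - 2) * z ^ d = 1) (hne : z ≠ Λ) :
    ‖z‖ < 1 := by
  by_contra! h1
  have hinv {w : ℂ} (hw : 9 / 5 ≤ ‖w‖) : ‖w⁻¹‖ ≤ 5 / 9 := by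
    rw [norm_inv]; exact inv_le_of_inv_le₀ (by norm_num) (by norm_num; exact hw)
  refine hne (inv_injective (eq_of_two_mul_add_pow_eq_one (two_mul_inv_add_inv_pow_eq_one hz)
    (two_mul_inv_add_inv_pow_eq_one hΛ) (hinv ?_) (hinv hΛ')))
  exact (nine_fifths_lt_norm_of_sub_two_mul_pow_eq_one hd hz h1).le

theorem norm_one_div_succ_mul_sub_two_mul_le {d : ℕ} (hd : 2 ≤ d) {z : ℂ} (hz : ‖z‖ ≤ 1) :
    ‖1 / (((d : ℂ) + 1) * z - 2 * d)‖ ≤ 1 / ((d : ℝ) - 1) := by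
  have hd' : (2 : ℝ) ≤ d := by exact_mod_cast hd
  rw [norm_div, norm_one]
  refine one_div_le_one_div_of_le (by linarith) ?_
  calc (d : ℝ) - 1 ≤ 2 * d - (d + 1) * ‖z‖ := by nlinarith
    _ = ‖(2 * d : ℂ)‖ - ‖((d : ℂ) + 1) * z‖ := by
      rw [show (d : ℂ) + 1 = ((d + 1 : ℕ) : ℂ) by push_cast; ring, norm_mul, norm_mul,
        Complex.norm_natCast, Complex.norm_natCast]
      norm_num
    _ ≤ ‖((d : ℂ) + 1) * z - 2 * d‖ := by rw [norm_sub_rev]; exact norm_sub_norm_le _ _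

theorem two_le_norm_three_sub {z : ℂ} (hz : ‖z‖ ≤ 1) : 2 ≤ ‖3 - z‖ :=
  calc (2 : ℝ) ≤ ‖(3 : ℂ)‖ - ‖z‖ := by norm_num; linarith
    _ ≤ ‖3 - z‖ := norm_sub_norm_le _ _

theorem norm_sub_two_mul_pow_div_three_sub_le {d : ℕ} {z : ℂ} (hz : (z - 2) * z ^ d = 1)
    (hz1 : ‖z‖ ≤ 1) : ‖(z - 2) * z ^ d / (3 - z)‖ ≤ 1 / 2 := by
  rw [hz, norm_div, norm_one]
  exact one_div_le_one_div_of_le two_pos (two_le_norm_three_sub hz1)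

theorem sub_two_div_three_sub_le {d : ℕ} {Λ : ℝ} (hΛ : Λ ∈ Set.Ioo (2 : ℝ) 3)
    (hroot : (Λ - 2) * Λ ^ d = 1) : (Λ - 2) / (3 - Λ) ≤ 1 / (2 ^ d - 1) := by
  obtain ⟨h2, h3⟩ := hΛ
  have hpow : (Λ - 2) * 2 ^ d ≤ 1 :=
    hroot ▸ mul_le_mul_of_nonneg_left (pow_le_pow_left₀ zero_le_two h2.le d) (by linarith)
  have hd : d ≠ 0 := by rintro rfl; norm_num at hroot; linarith
  have h2d : (1 : ℝ) < 2 ^ d := one_lt_pow₀ one_lt_two hd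
  rw [div_le_div_iff₀ (by linarith) (by linarith)]
  linarith

theorem norm_root_term_le {d : ℕ} (hd : 2 ≤ d) (n : ℕ) {z : ℂ} (hz : (z - 2) * z ^ d = 1)
    (hz1 : ‖z‖ ≤ 1) {c C : ℝ} (hc : 0 ≤ c) (hcC : c ≤ C) :
    ‖1 / (((d : ℂ) + 1) * z - 2 * d) * ((z - 2) / (3 - z) - c) * z ^ (n + d + 1)‖ ≤
      1 / ((d : ℝ) - 1) * (1 / 2 + C) := by
  have hd' : (2 : ℝ) ≤ d := by exact_mod_cast hd
  have hpow (k : ℕ) : ‖z ^ k‖ ≤ 1 := by rw [norm_pow]; exact pow_le_one₀ (norm_nonneg z) hz1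
  have hfirst : ‖(z - 2) / (3 - z) * z ^ (n + d + 1)‖ ≤ 1 / 2 := by
    rw [show (z - 2) / (3 - z) * z ^ (n + d + 1) = (z - 2) * z ^ d / (3 - z) * z ^ (n + 1) by ring,
      norm_mul]
    calc ‖(z - 2) * z ^ d / (3 - z)‖ * ‖z ^ (n + 1)‖ ≤ 1 / 2 * 1 :=
          mul_le_mul (norm_sub_two_mul_pow_div_three_sub_le hz hz1) (hpow _) (norm_nonneg _)
            (by norm_num)
      _ = 1 / 2 := mul_one _
  have hsecond : ‖(c : ℂ) * z ^ (n + d + 1)‖ ≤ C := by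
    rw [norm_mul, Complex.norm_real, Real.norm_of_nonneg hc]
    nlinarith [hpow (n + d + 1), norm_nonneg (z ^ (n + d + 1))]
  rw [mul_assoc, norm_mul, sub_mul]
  gcongr
  · exact one_div_nonneg.2 (by linarith)
  · exact norm_one_div_succ_mul_sub_two_mul_le hd hz1
  · exact (norm_sub_le _ _).trans (add_le_add hfirst hsecond)

theorem norm_sum_root_term_le {d : ℕ} (hd : 2 ≤ d) (n : ℕ) {T : Finset ℂ}
    (hT : ∀ z ∈ T, (z - 2) * z ^ d = 1 ∧ ‖z‖ ≤ 1) (hcard : #T ≤ d) {c C : ℝ} (hc : 0 ≤ c)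
    (hcC : c ≤ C) :
    ‖∑ z ∈ T, 1 / (((d : ℂ) + 1) * z - 2 * d) * ((z - 2) / (3 - z) - c) * z ^ (n + d + 1)‖ ≤
      (d : ℝ) / ((d : ℝ) - 1) * (1 / 2 + C) := by
  have hd' : (2 : ℝ) ≤ d := by exact_mod_cast hd
  calc _ ≤ ∑ _z ∈ T, 1 / ((d : ℝ) - 1) * (1 / 2 + C) :=
        norm_sum_le_of_le _ fun z hz => norm_root_term_le hd n (hT z hz).1 (hT z hz).2 hc hcC
    _ ≤ d * (1 / ((d : ℝ) - 1) * (1 / 2 + C)) := by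
      rw [sum_const, nsmul_eq_mul]
      gcongr
      exact mul_nonneg (one_div_nonneg.2 (by linarith)) (by linarith)
    _ = _ := by ring

theorem cast_div_sub_one_mul_half_add_lt_one {d : ℕ} (hd : 3 ≤ d) :
    (d : ℝ) / ((d : ℝ) - 1) * (1 / 2 + 1 / (2 ^ d - 1)) < 1 := by
  obtain rfl | hd4 := hd.eq_or_lt
  · norm_num
  have hd4' : (4 : ℝ) ≤ d := by exact_mod_cast hd4
  have h16 : (16 : ℝ) ≤ 2 ^ d :=
    calc (16 : ℝ) = 2 ^ 4 := by norm_num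
      _ ≤ 2 ^ d := pow_le_pow_right₀ one_le_two hd4
  have hinv : 1 / ((2 : ℝ) ^ d - 1) ≤ 1 / 15 := one_div_le_one_div_of_le (by norm_num) (by linarith)
  rw [div_mul_eq_mul_div, div_lt_one (by linarith)]
  nlinarith

theorem stmt_17 (d : ℕ) (hd : 3 ≤ d)
    (S : Finset ℂ)
    (hS : ∀ z : ℂ, z ∈ S ↔ z ^ (d + 1) - 2 * z ^ d - 1 = 0)
    (Λ : ℝ) (hΛmem : Λ ∈ Set.Ioo (2 : ℝ) 3)
    (hΛroot : Λ ^ (d + 1) - 2 * Λ ^ d - 1 = 0)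
    (lam : ℂ) (hlam : lam ∈ S) (hlam1 : ‖lam‖ < 1) :
    ‖1 / (((d : ℂ) + 1) * lam - 2 * d)‖ ≤ 1 / ((d : ℝ) - 1) ∧
    ‖(lam - 2) * lam ^ d / (3 - lam)‖ ≤ 1 / 2 ∧
    (Λ - 2) / (3 - Λ) ≤ 1 / (2 ^ d - 1) ∧
    (∀ n : ℕ,
      ‖∑ z ∈ S \ {(Λ : ℂ)},
          1 / (((d : ℂ) + 1) * z - 2 * d) *
            ((z - 2) / (3 - z) - ((Λ : ℂ) - 2) / (3 - (Λ : ℂ))) * z ^ (n + d + 1)‖ ≤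
        (d : ℝ) / ((d : ℝ) - 1) * (1 / 2 + 1 / (2 ^ d - 1))) ∧
    (d : ℝ) / ((d : ℝ) - 1) * (1 / 2 + 1 / (2 ^ d - 1)) < 1 := by
  have hroot (z : ℂ) (hz : z ∈ S) : (z - 2) * z ^ d = 1 :=
    (pow_succ_sub_two_mul_pow_sub_one_eq_zero_iff d z).1 ((hS z).1 hz)
  have hΛ : (Λ - 2) * Λ ^ d = 1 := (pow_succ_sub_two_mul_pow_sub_one_eq_zero_iff d Λ).1 hΛroot
  have hΛS : (Λ : ℂ) ∈ S := (hS _).2 (by exact_mod_cast hΛroot)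
  have hsmall (z : ℂ) (hz : z ∈ S \ {(Λ : ℂ)}) : ‖z‖ < 1 := by
    rw [mem_sdiff, mem_singleton] at hz
    refine norm_lt_one_of_sub_two_mul_pow_eq_one hd (hroot _ hΛS) ?_ (hroot z hz.1) hz.2
    rw [Complex.norm_real, Real.norm_of_nonneg (by linarith [hΛmem.1])]
    linarith [hΛmem.1]
  have hcard : #(S \ {(Λ : ℂ)}) ≤ d := by
    have := card_le_of_forall_pow_succ_sub_two_mul_pow_sub_one_eq_zero fun z hz => (hS z).1 hz
    rw [card_sdiff_of_subset (singleton_subset_iff.2 hΛS), card_singleton]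
    omega
  have hc : ((Λ : ℂ) - 2) / (3 - Λ) = ((Λ - 2) / (3 - Λ) : ℝ) := by push_cast; ring
  have hc0 : 0 ≤ (Λ - 2) / (3 - Λ) := div_nonneg (by linarith [hΛmem.1]) (by linarith [hΛmem.2])
  have hcC := sub_two_div_three_sub_le hΛmem hΛ
  refine ⟨norm_one_div_succ_mul_sub_two_mul_le (by omega) hlam1.le,
    norm_sub_two_mul_pow_div_three_sub_le (hroot lam hlam) hlam1.le, hcC, fun n => ?_,
    cast_div_sub_one_mul_half_add_lt_one hd⟩
  rw [hc]
  exact norm_sum_root_term_le (by omega) n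
    (fun z hz => ⟨hroot z (mem_sdiff.1 hz).1, (hsmall z hz).le⟩) hcard hc0 hcC
end
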